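/- arXiv:2103.05097 — 6 statements merged into one kernel-verified Lean document; each statement's English description precedes it below -/
import Mathlib

section
/- Let X be a separable real Banach space of dimension greater than 1. Then add(X) = ℵ₁, non(X) = ℵ₁, cov(X) = 𝔠 (the cardinality of the continuum), and cof(X) = 𝔠. -/
open Cardinal Set

universe u v

noncomputable section

/-- A hyperplane of a normed space: the kernel of a nonzero continuous linear functional. -/
def IsHyperplane {X : Type u} [NormedAddCommGroup X] [NormedSpace ℝ X] (H : Set X) : Prop :=
  ∃ f : X →L[ℝ] ℝ, f ≠ 0 ∧ H = {x | f x = 0}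

/-- Member of the σ-ideal generated by hyperplanes: covered by countably many hyperplanes. -/
def InHyperplaneIdeal {X : Type u} [NormedAddCommGroup X] [NormedSpace ℝ X] (Y : Set X) : Prop :=
  ∃ F : Set (Set X), F.Countable ∧ (∀ H ∈ F, IsHyperplane H) ∧ Y ⊆ ⋃₀ F

/-- Additivity of the hyperplane σ-ideal. -/
def addH (X : Type u) [NormedAddCommGroup X] [NormedSpace ℝ X] : Cardinal.{u} :=
  sInf {c | ∃ F : Set (Set X), (∀ A ∈ F, InHyperplaneIdeal A) ∧
    ¬ InHyperplaneIdeal (⋃₀ F) ∧ #F = c}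

/-- Covering number of the hyperplane σ-ideal. -/
def covH (X : Type u) [NormedAddCommGroup X] [NormedSpace ℝ X] : Cardinal.{u} :=
  sInf {c | ∃ F : Set (Set X), (∀ A ∈ F, InHyperplaneIdeal A) ∧ ⋃₀ F = Set.univ ∧ #F = c}

/-- Uniformity of the hyperplane σ-ideal. -/
def nonH (X : Type u) [NormedAddCommGroup X] [NormedSpace ℝ X] : Cardinal.{u} :=
  sInf {c | ∃ Y : Set X, ¬ InHyperplaneIdeal Y ∧ #Y = c}

/-- Cofinality of the hyperplane σ-ideal. -/
def cofH (X : Type u) [NormedAddCommGroup X] [NormedSpace ℝ X] : Cardinal.{u} :=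
  sInf {c | ∃ F : Set (Set X), (∀ A ∈ F, InHyperplaneIdeal A) ∧
    (∀ Y : Set X, InHyperplaneIdeal Y → ∃ A ∈ F, Y ⊆ A) ∧ #F = c}

/-- Density of a topological space: least cardinality of a dense subset. -/
def densH (X : Type u) [TopologicalSpace X] : Cardinal.{u} :=
  sInf {c | ∃ D : Set X, Dense D ∧ #D = c}

/-- `cf([κ]^ω)`: least cardinality of a cofinal family of countable subsets of κ. -/
def cfCtblSubsets (κ : Cardinal.{u}) : Cardinal.{u} :=
  sInf {c | ∃ F : Set (Set κ.out), (∀ S ∈ F, S.Countable) ∧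
    (∀ S : Set κ.out, S.Countable → ∃ T ∈ F, S ⊆ T) ∧ #F = c}

/-- A compact space has small diagonal. -/
def HasSmallDiagonal (K : Type u) [TopologicalSpace K] : Prop :=
  ∀ A : Set (K × K), #A = Cardinal.aleph 1 → A ∩ Set.diagonal K = ∅ →
    ∃ B ⊆ A, ¬ B.Countable ∧ closure B ∩ Set.diagonal K = ∅

/-- A topological space is scattered. -/
def IsScattered (K : Type u) [TopologicalSpace K] : Prop :=
  ∀ S : Set K, S.Nonempty → ∃ x ∈ S, ∃ U : Set K, IsOpen U ∧ U ∩ S = {x}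


/-!
A separable Banach space `X` contains a set `C` of size `𝔠` meeting every hyperplane in a
countable set. Take `C = γ '' (-1, 1)` for the analytic curve `γ t = ∑ tⁿ • aₙ`, where the `aₙ`
are rescaled points of a dense sequence: for a nonzero functional `f`, the function `f ∘ γ` is
analytic and not constant (its coefficients `f aₙ` do not all vanish), so each of its level sets
is countable. Hence a member of `H_σ(X)` meets `C` in a countable set, so `ℵ₁` points of `C` are
not in `H_σ(X)`, and fewer than `𝔠` members of `H_σ(X)` cannot cover `C`. The matching bounds
come from `dim X > 1` (every point lies on a hyperplane, so countable sets are in `H_σ(X)`) and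
from separability (there are at most `𝔠` hyperplanes, hence at most `𝔠 ^ ℵ₀ = 𝔠` countable
unions of hyperplanes).
-/

open Filter Metric TopologicalSpace

theorem continuum_le_of_continuum_le_mul_aleph0 {a : Cardinal} (h : 𝔠 ≤ a * ℵ₀) : 𝔠 ≤ a := by
  by_contra! ha
  exact (mul_lt_of_lt aleph0_le_continuum ha aleph0_lt_continuum).not_ge h

theorem continuum_le_mk_image_of_countable_fibers {α : Type v} {β : Type u} {s : Set α}
    (hs : 𝔠 ≤ #s) (g : α → β) (hg : ∀ y, (s ∩ g ⁻¹' {y}).Countable) : 𝔠 ≤ #(g '' s) := by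
  have hfibers := lift_mk_le_lift_mk_mul_of_lift_mk_preimage_le (s.imageFactorization g)
    (c := ℵ₀) fun y => by
      refine lift_le_aleph0.mpr (Countable.le_aleph0 ?_)
      refine ((hg y).preimage Subtype.val_injective).mono ?_
      rintro x (hx : _ = y)
      exact ⟨x.2, congr_arg Subtype.val hx⟩
  refine continuum_le_of_continuum_le_mul_aleph0 (lift_le.{v}.mp ?_)
  simpa using (lift_le.{u}.mpr hs).trans hfibers

section Analytic

variable {𝕜 E : Type*} [NontriviallyNormedField 𝕜] [SecondCountableTopology 𝕜]
  [NormedAddCommGroup E] [NormedSpace 𝕜 E]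

theorem AnalyticOnNhd.countable_inter_preimage_singleton {f : 𝕜 → E} {U : Set 𝕜}
    (hf : AnalyticOnNhd 𝕜 f U) (hU : IsPreconnected U) {y : E}
    (hne : ¬ EqOn f (fun _ => y) U) : (U ∩ f ⁻¹' {y}).Countable := by
  by_contra hc
  obtain ⟨x, ⟨hxU, -⟩, hx⟩ : ∃ x ∈ U ∩ f ⁻¹' {y}, AccPt x (𝓟 (U ∩ f ⁻¹' {y})) := by
    by_contra! h
    exact hc ((HereditarilyLindelofSpace.isLindelof _).countable (discreteTopology_of_noAccPts h))
  refine hne (hf.eqOn_of_preconnected_of_frequently_eq analyticOnNhd_const hU hxU ?_)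
  exact (accPt_iff_frequently_nhdsNE.mp hx).mono fun t ht => ht.2

end Analytic

namespace FormalMultilinearSeries

variable {𝕜 E : Type*} [NontriviallyNormedField 𝕜] [NormedAddCommGroup E] [NormedSpace 𝕜 E]

/-- The one-variable power series `∑ tⁿ • a n`. -/
def ofCoeff (a : ℕ → E) : FormalMultilinearSeries 𝕜 𝕜 E :=
  fun n => ContinuousMultilinearMap.mkPiRing 𝕜 (Fin n) (a n)

@[simp]
theorem coeff_ofCoeff (a : ℕ → E) (n : ℕ) : (ofCoeff (𝕜 := 𝕜) a).coeff n = a n := by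
  simp [ofCoeff, coeff]

theorem one_le_radius_ofCoeff {a : ℕ → E} {C : ℝ} (ha : ∀ n, ‖a n‖ ≤ C) :
    1 ≤ (ofCoeff (𝕜 := 𝕜) a).radius := by
  refine le_radius_of_bound _ C fun n => ?_
  simpa [ofCoeff] using ha n

end FormalMultilinearSeries

open FormalMultilinearSeries in
theorem countable_ball_inter_preimage_sum_ofCoeff {E F : Type*} [NormedAddCommGroup E]
    [NormedSpace ℝ E] [CompleteSpace E] [NormedAddCommGroup F] [NormedSpace ℝ F]
    {a : ℕ → E} {C : ℝ} (ha : ∀ n, ‖a n‖ ≤ C) (f : E →L[ℝ] F) {n : ℕ} (hn : n ≠ 0)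
    (hfa : f (a n) ≠ 0) (r : F) :
    (ball (0 : ℝ) 1 ∩ (f ∘ (ofCoeff a).sum) ⁻¹' {r}).Countable := by
  set p : FormalMultilinearSeries ℝ ℝ E := ofCoeff a
  have hp : HasFPowerSeriesOnBall p.sum p 0 1 :=
    (p.hasFPowerSeriesOnBall (zero_lt_one.trans_le (one_le_radius_ofCoeff ha))).mono
      one_pos (one_le_radius_ofCoeff ha)
  have han : AnalyticOnNhd ℝ (f ∘ p.sum) (ball 0 1) := by
    simpa [← ENNReal.coe_one, Metric.eball_coe] using f.comp_analyticOnNhd hp.analyticOnNhd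
  refine han.countable_inter_preimage_singleton (convex_ball 0 1).isPreconnected
    fun hconst => hfa ?_
  have hseries : f.compFormalMultilinearSeries p = constFormalMultilinearSeries ℝ ℝ r :=
    (f.comp_hasFPowerSeriesOnBall hp).hasFPowerSeriesAt.eq_formalMultilinearSeries_of_eventually
      hasFPowerSeriesAt_const (eventually_of_mem (ball_mem_nhds 0 one_pos) hconst)
  simpa [p, constFormalMultilinearSeries_apply_of_nonzero hn] using congr($hseries n 1)

theorem exists_ne_zero_map_eq_zero_of_one_lt_rank {R V : Type*} [Field R] [TopologicalSpace R]
    [IsTopologicalRing R] [AddCommGroup V] [TopologicalSpace V] [Module R V]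
    [SeparatingDual R V] (hV : 1 < Module.rank R V) (x : V) :
    ∃ f : V →L[R] R, f ≠ 0 ∧ f x = 0 := by
  obtain rfl | hx := eq_or_ne x 0
  · have : Nontrivial V := rank_pos_iff_nontrivial.mp (zero_lt_one.trans hV)
    obtain ⟨f, hf⟩ := exists_ne (0 : V →L[R] R)
    exact ⟨f, hf, map_zero f⟩
  obtain ⟨y, hxy⟩ := exists_linearIndependent_pair_of_one_lt_rank hV hx
  obtain ⟨g, hg⟩ := SeparatingDual.exists_eq_one (R := R) hx
  have hy : y - g y • x ≠ 0 := fun h => by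
    simpa using (LinearIndependent.pair_iff.mp hxy (-g y) 1 (by rw [← h]; module)).2
  obtain ⟨h, hh⟩ := SeparatingDual.exists_ne_zero (R := R) hy
  refine ⟨h - h x • g, fun h0 => hh ?_, by simp [hg]⟩
  simpa [hg] using congr($h0 (y - g y • x))

section HyperplaneIdeal

variable {X : Type u} [NormedAddCommGroup X] [NormedSpace ℝ X]

theorem exists_isHyperplane_mem (hdim : 1 < Module.rank ℝ X) (x : X) :
    ∃ H : Set X, IsHyperplane H ∧ x ∈ H := by
  obtain ⟨f, hf, hfx⟩ := exists_ne_zero_map_eq_zero_of_one_lt_rank hdim x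
  exact ⟨_, ⟨f, hf, rfl⟩, hfx⟩

theorem IsHyperplane.inHyperplaneIdeal {H : Set X} (hH : IsHyperplane H) :
    InHyperplaneIdeal H :=
  ⟨{H}, countable_singleton H, by simpa using hH, by simp⟩

theorem InHyperplaneIdeal.mono {Y Z : Set X} (hYZ : Y ⊆ Z) (hZ : InHyperplaneIdeal Z) :
    InHyperplaneIdeal Y :=
  let ⟨F, hFc, hFH, hZF⟩ := hZ
  ⟨F, hFc, hFH, hYZ.trans hZF⟩

theorem InHyperplaneIdeal.sUnion {F : Set (Set X)} (hF : F.Countable)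
    (h : ∀ A ∈ F, InHyperplaneIdeal A) : InHyperplaneIdeal (⋃₀ F) := by
  choose G hGc hGH hAG using h
  refine ⟨⋃ A ∈ F, G A ‹_›, hF.biUnion fun A hA => hGc A hA, ?_, ?_⟩
  · simp only [mem_iUnion]
    rintro H ⟨A, hA, hH⟩
    exact hGH A hA H hH
  · rintro x ⟨A, hA, hxA⟩
    obtain ⟨H, hH, hxH⟩ := hAG A hA hxA
    exact ⟨H, mem_iUnion₂.mpr ⟨A, hA, hH⟩, hxH⟩

theorem inHyperplaneIdeal_singleton (hdim : 1 < Module.rank ℝ X) (x : X) :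
    InHyperplaneIdeal {x} :=
  let ⟨_, hH, hxH⟩ := exists_isHyperplane_mem hdim x
  hH.inHyperplaneIdeal.mono (singleton_subset_iff.mpr hxH)

theorem Set.Countable.inHyperplaneIdeal (hdim : 1 < Module.rank ℝ X) {Y : Set X}
    (hY : Y.Countable) : InHyperplaneIdeal Y := by
  simpa using InHyperplaneIdeal.sUnion (hY.image singleton) (by
    rintro _ ⟨x, -, rfl⟩
    exact inHyperplaneIdeal_singleton hdim x)

theorem sUnion_eq_univ_of_forall_inHyperplaneIdeal_subset (hdim : 1 < Module.rank ℝ X)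
    {F : Set (Set X)} (hF : ∀ Y : Set X, InHyperplaneIdeal Y → ∃ A ∈ F, Y ⊆ A) :
    ⋃₀ F = Set.univ :=
  eq_univ_of_forall fun x =>
    let ⟨A, hA, hxA⟩ := hF {x} (inHyperplaneIdeal_singleton hdim x)
    ⟨A, hA, hxA rfl⟩

def CountablyMeetsHyperplanes (C : Set X) : Prop :=
  ∀ H : Set X, IsHyperplane H → (C ∩ H).Countable

theorem CountablyMeetsHyperplanes.countable_inter {C Y : Set X}
    (hC : CountablyMeetsHyperplanes C) (hY : InHyperplaneIdeal Y) : (C ∩ Y).Countable := by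
  obtain ⟨F, hFc, hFH, hYF⟩ := hY
  refine (hFc.biUnion fun H hH => hC H (hFH H hH)).mono ?_
  rintro x ⟨hxC, hxY⟩
  obtain ⟨H, hH, hxH⟩ := hYF hxY
  exact mem_biUnion hH ⟨hxC, hxH⟩

theorem CountablyMeetsHyperplanes.mk_le_mk_mul_aleph0 {C : Set X}
    (hC : CountablyMeetsHyperplanes C) {F : Set (Set X)} (hF : ∀ A ∈ F, InHyperplaneIdeal A)
    (hCF : C ⊆ ⋃₀ F) : #C ≤ #F * ℵ₀ :=
  calc #C = #(⋃ A ∈ F, C ∩ A) := by rw [← inter_iUnion₂, ← sUnion_eq_biUnion, inter_eq_left.mpr hCF]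
    _ ≤ #F * ⨆ A : F, #(C ∩ A.1 : Set X) := mk_biUnion_le _ _
    _ ≤ #F * ℵ₀ := by
      gcongr
      exact ciSup_le' fun A => (hC.countable_inter (hF A A.2)).le_aleph0

theorem CountablyMeetsHyperplanes.exists_not_inHyperplaneIdeal {C : Set X}
    (hC : CountablyMeetsHyperplanes C) (hCcard : ℵ₁ ≤ #C) :
    ∃ S : Set X, ¬ InHyperplaneIdeal S ∧ #S = ℵ₁ := by
  obtain ⟨S, hSC, hS⟩ := le_mk_iff_exists_subset.mp hCcard
  refine ⟨S, fun hSideal => ?_, hS⟩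
  have hS_countable : S.Countable := inter_eq_right.mpr hSC ▸ hC.countable_inter hSideal
  exact (lt_aleph_one_iff.mpr hS_countable.le_aleph0).ne hS

theorem mk_continuousLinearMap_le_continuum [SeparableSpace X] : #(X →L[ℝ] ℝ) ≤ 𝔠 := by
  obtain ⟨D, hDc, hD⟩ := exists_countable_dense X
  have hinj : Function.Injective fun f : X →L[ℝ] ℝ => fun x : D => f x := by
    intro f g hfg
    exact DFunLike.coe_injective <| Continuous.ext_on hD f.continuous g.continuous
      fun x hx => congr_fun hfg ⟨x, hx⟩
  calc #(X →L[ℝ] ℝ) ≤ #(D → ℝ) := mk_le_of_injective hinj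
    _ = 𝔠 ^ lift.{0} #D := by rw [mk_arrow, mk_real, lift_continuum]
    _ ≤ 𝔠 ^ ℵ₀ := power_le_power_left continuum_ne_zero (by simpa using hDc.le_aleph0)
    _ = 𝔠 := continuum_power_aleph0

theorem mk_setOf_isHyperplane_le_continuum [SeparableSpace X] :
    #{H : Set X | IsHyperplane H} ≤ 𝔠 :=
  calc #{H : Set X | IsHyperplane H}
      ≤ #(range fun f : X →L[ℝ] ℝ => {x | f x = 0}) := by
        refine mk_le_mk_of_subset ?_
        rintro H ⟨f, -, rfl⟩
        exact mem_range_self f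
    _ ≤ #(X →L[ℝ] ℝ) := mk_range_le
    _ ≤ 𝔠 := mk_continuousLinearMap_le_continuum

theorem exists_cofinal_inHyperplaneIdeal_mk_le_continuum [SeparableSpace X] :
    ∃ F : Set (Set X), (∀ A ∈ F, InHyperplaneIdeal A) ∧
      (∀ Y : Set X, InHyperplaneIdeal Y → ∃ A ∈ F, Y ⊆ A) ∧ #F ≤ 𝔠 := by
  set Hyp := {H : Set X | IsHyperplane H}
  refine ⟨range fun t : {t : Set Hyp // #t ≤ ℵ₀} => ⋃ H ∈ t.1, (H : Set X), ?_, ?_, ?_⟩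
  · rintro _ ⟨⟨t, ht⟩, rfl⟩
    refine ⟨Subtype.val '' t, (le_aleph0_iff_set_countable.mp ht).image _, ?_, ?_⟩
    · rintro _ ⟨H, -, rfl⟩
      exact H.2
    · simp only [sUnion_image, Subset.rfl]
  · rintro Y ⟨G, hGc, hGH, hYG⟩
    refine ⟨_, mem_range_self ⟨Subtype.val ⁻¹' G,
      (hGc.preimage Subtype.val_injective).le_aleph0⟩, hYG.trans ?_⟩
    rintro x ⟨H, hH, hxH⟩
    exact mem_iUnion₂.mpr ⟨⟨H, hGH H hH⟩, hH, hxH⟩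
  · calc _ ≤ #{t : Set Hyp // #t ≤ ℵ₀} := mk_range_le
      _ ≤ max #Hyp ℵ₀ ^ ℵ₀ := mk_bounded_set_le _ _
      _ ≤ 𝔠 ^ ℵ₀ :=
        power_le_power_right (max_le mk_setOf_isHyperplane_le_continuum aleph0_le_continuum)
      _ = 𝔠 := continuum_power_aleph0

end HyperplaneIdeal

theorem exists_countablyMeetsHyperplanes_continuum_le_mk (X : Type u) [NormedAddCommGroup X]
    [NormedSpace ℝ X] [CompleteSpace X] [SeparableSpace X] [Nontrivial X] :
    ∃ C : Set X, CountablyMeetsHyperplanes C ∧ 𝔠 ≤ #C := by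
  obtain ⟨d, hd⟩ := exists_dense_seq X
  -- The constant coefficient is invisible to level sets, so every `d m` is placed at index `m + 1`.
  set a : ℕ → X := fun n => (1 + ‖d (n - 1)‖)⁻¹ • d (n - 1)
  have ha : ∀ n, ‖a n‖ ≤ 1 := fun n => by
    rw [norm_smul, norm_inv, Real.norm_of_nonneg (by positivity), inv_mul_le_one₀ (by positivity)]
    linarith
  set γ : ℝ → X := (FormalMultilinearSeries.ofCoeff a).sum
  have hlevel : ∀ f : X →L[ℝ] ℝ, f ≠ 0 → ∀ r, (ball (0 : ℝ) 1 ∩ (f ∘ γ) ⁻¹' {r}).Countable := by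
    intro f hf r
    obtain ⟨m, hm⟩ : ∃ m, f (d m) ≠ 0 := by
      by_contra! h
      refine hf (DFunLike.coe_injective (Continuous.ext_on hd f.continuous continuous_zero ?_))
      rintro _ ⟨m, rfl⟩
      exact h m
    refine countable_ball_inter_preimage_sum_ofCoeff ha f m.succ_ne_zero ?_ r
    simpa [a, hm] using (by positivity : (1 + ‖d m‖)⁻¹ ≠ 0)
  obtain ⟨f₀, hf₀⟩ := exists_ne (0 : X →L[ℝ] ℝ)
  refine ⟨γ '' ball 0 1, ?_, ?_⟩
  · rintro _ ⟨f, hf, rfl⟩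
    refine ((hlevel f hf 0).image γ).mono ?_
    rintro _ ⟨⟨t, ht, rfl⟩, hft⟩
    exact ⟨t, ⟨ht, hft⟩, rfl⟩
  · refine continuum_le_mk_image_of_countable_fibers (by simp [Real.ball_eq_Ioo, mk_Ioo_real]) γ
      fun y => (hlevel f₀ hf₀ (f₀ y)).mono ?_
    rintro t ⟨ht, rfl : γ t = y⟩
    exact ⟨ht, rfl⟩

section CardinalInvariants

variable {X : Type u} [NormedAddCommGroup X] [NormedSpace ℝ X]

theorem nonH_eq_aleph_one (hdim : 1 < Module.rank ℝ X) {S : Set X}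
    (hS : ¬ InHyperplaneIdeal S) (hScard : #S = ℵ₁) : nonH X = ℵ₁ := by
  refine le_antisymm (csInf_le' ⟨S, hS, hScard⟩) (le_csInf ⟨_, S, hS, hScard⟩ ?_)
  rintro _ ⟨Y, hY, rfl⟩
  by_contra! hYcard
  exact hY ((lt_aleph_one_iff.mp hYcard |> le_aleph0_iff_set_countable.mp).inHyperplaneIdeal hdim)

theorem addH_eq_aleph_one (hdim : 1 < Module.rank ℝ X) {S : Set X}
    (hS : ¬ InHyperplaneIdeal S) (hScard : #S = ℵ₁) : addH X = ℵ₁ := by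
  have hsingletons : ∃ F : Set (Set X), (∀ A ∈ F, InHyperplaneIdeal A) ∧
      ¬ InHyperplaneIdeal (⋃₀ F) ∧ #F = ℵ₁ := by
    refine ⟨singleton '' S, ?_, by simpa [sUnion_image] using hS, ?_⟩
    · rintro _ ⟨x, -, rfl⟩
      exact inHyperplaneIdeal_singleton hdim x
    · rw [mk_image_eq singleton_injective, hScard]
  refine le_antisymm (csInf_le' hsingletons) (le_csInf ⟨_, hsingletons⟩ ?_)
  rintro _ ⟨F, hF, hFU, rfl⟩
  by_contra! hFcard
  exact hFU (.sUnion (lt_aleph_one_iff.mp hFcard |> le_aleph0_iff_set_countable.mp) hF)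

theorem covH_eq_continuum [SeparableSpace X] (hdim : 1 < Module.rank ℝ X) {C : Set X}
    (hC : CountablyMeetsHyperplanes C) (hCcard : 𝔠 ≤ #C) : covH X = 𝔠 := by
  have hhyperplanes : ∃ F : Set (Set X), (∀ A ∈ F, InHyperplaneIdeal A) ∧ ⋃₀ F = Set.univ ∧
      #F = #{H : Set X | IsHyperplane H} :=
    ⟨_, fun _ hH => IsHyperplane.inHyperplaneIdeal hH,
      eq_univ_of_forall fun x => exists_isHyperplane_mem hdim x, rfl⟩
  refine le_antisymm (le_trans (b := #{H : Set X | IsHyperplane H}) (csInf_le' hhyperplanes)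
    mk_setOf_isHyperplane_le_continuum) (le_csInf ⟨_, hhyperplanes⟩ ?_)
  rintro _ ⟨F, hF, hFX, rfl⟩
  exact continuum_le_of_continuum_le_mul_aleph0
    (hCcard.trans (hC.mk_le_mk_mul_aleph0 hF (hFX ▸ subset_univ C)))

theorem cofH_eq_continuum [SeparableSpace X] (hdim : 1 < Module.rank ℝ X) {C : Set X}
    (hC : CountablyMeetsHyperplanes C) (hCcard : 𝔠 ≤ #C) : cofH X = 𝔠 := by
  obtain ⟨F₀, hF₀, hF₀cof, hF₀card⟩ := exists_cofinal_inHyperplaneIdeal_mk_le_continuum (X := X)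
  refine le_antisymm (le_trans (b := #F₀) (csInf_le' ⟨F₀, hF₀, hF₀cof, rfl⟩) hF₀card)
    (le_csInf ⟨_, F₀, hF₀, hF₀cof, rfl⟩ ?_)
  rintro _ ⟨F, hF, hFcof, rfl⟩
  have hFX := sUnion_eq_univ_of_forall_inHyperplaneIdeal_subset hdim hFcof
  exact continuum_le_of_continuum_le_mul_aleph0
    (hCcard.trans (hC.mk_le_mk_mul_aleph0 hF (hFX ▸ subset_univ C)))

end CardinalInvariants

/-- For a separable Banach space of dimension > 1,
add = ℵ₁, non = ℵ₁, cov = 𝔠, cof = 𝔠. -/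
theorem stmt0 (X : Type u) [NormedAddCommGroup X] [NormedSpace ℝ X] [CompleteSpace X]
    [TopologicalSpace.SeparableSpace X] (hdim : 1 < Module.rank ℝ X) :
    addH X = Cardinal.aleph 1 ∧ nonH X = Cardinal.aleph 1 ∧
      covH X = Cardinal.continuum ∧ cofH X = Cardinal.continuum := by
  have : Nontrivial X := rank_pos_iff_nontrivial.mp (zero_lt_one.trans hdim)
  obtain ⟨C, hC, hCcard⟩ := exists_countablyMeetsHyperplanes_continuum_le_mk X
  obtain ⟨S, hS, hScard⟩ := hC.exists_not_inHyperplaneIdeal (aleph_one_le_continuum.trans hCcard)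
  exact ⟨addH_eq_aleph_one hdim hS hScard, nonH_eq_aleph_one hdim hS hScard,
    covH_eq_continuum hdim hC hCcard, cofH_eq_continuum hdim hC hCcard⟩

end
end

section
/- Let X be a real Banach space and let H be a hyperplane of X. If H is contained in the union of a countable family {H_i : i ∈ ℕ} of hyperplanes of X, then H = H_i for some i ∈ ℕ. -/
open Cardinal Set

universe u v

noncomputable section

/-! The kernel `K` of a nonzero functional is a closed subspace of a Banach space, hence a Baire
space. The traces on `K` of the countably many hyperplanes are closed subspaces of `K` covering it,
so one of them has nonempty interior in `K` and is therefore all of `K`; thus `K ⊆ ker g` for some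
nonzero functional `g`. Since a hyperplane is a maximal proper subspace, `K = ker g`. -/

theorem Submodule.exists_eq_top_of_iUnion_eq_univ {ι 𝕜 E : Type*} [Countable ι]
    [NontriviallyNormedField 𝕜] [AddCommGroup E] [TopologicalSpace E] [BaireSpace E]
    [ContinuousAdd E] [Module 𝕜 E] [ContinuousSMul 𝕜 E] {S : ι → Submodule 𝕜 E}
    (hS : ∀ i, IsClosed (S i : Set E)) (hU : ⋃ i, (S i : Set E) = Set.univ) : ∃ i, S i = ⊤ :=
  (nonempty_interior_of_iUnion_of_closed hS hU).imp fun i hi =>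
    (S i).eq_top_of_nonempty_interior' hi

theorem Submodule.exists_le_of_subset_iUnion {ι 𝕜 E : Type*} [Countable ι]
    [NontriviallyNormedField 𝕜] [NormedAddCommGroup E] [NormedSpace 𝕜 E] [CompleteSpace E]
    {K : Submodule 𝕜 E} (hK : IsClosed (K : Set E)) {S : ι → Submodule 𝕜 E}
    (hS : ∀ i, IsClosed (S i : Set E)) (hsub : (K : Set E) ⊆ ⋃ i, (S i : Set E)) :
    ∃ i, K ≤ S i := by
  have : CompleteSpace K := hK.completeSpace_coe
  have hcover : ⋃ i, ((S i).comap K.subtype : Set K) = Set.univ := by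
    refine Set.eq_univ_of_forall fun x => ?_
    simpa using hsub x.2
  obtain ⟨i, hi⟩ := exists_eq_top_of_iUnion_eq_univ
    (fun i => (hS i).preimage continuous_subtype_val) hcover
  exact ⟨i, Submodule.comap_subtype_eq_top.mp hi⟩

theorem LinearMap.ker_eq_ker_of_le {K V : Type*} [DivisionRing K] [AddCommGroup V] [Module K V]
    {f g : V →ₗ[K] K} (hf : f ≠ 0) (hg : g ≠ 0) (h : LinearMap.ker f ≤ LinearMap.ker g) :
    LinearMap.ker f = LinearMap.ker g :=
  (((isCoatom_ker_of_surjective (surjective_of_ne_zero hf)).le_iff.mp h).resolve_left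
    (mt ker_eq_top.mp hg)).symm

/-- a hyperplane contained in a countable union of hyperplanes equals one of them. -/
theorem stmt2 (X : Type u) [NormedAddCommGroup X] [NormedSpace ℝ X] [CompleteSpace X]
    (H : Set X) (hH : IsHyperplane H) (F : ℕ → Set X) (hF : ∀ i, IsHyperplane (F i))
    (hsub : H ⊆ ⋃ i, F i) :
    ∃ i, H = F i := by
  obtain ⟨f, hf, rfl⟩ := hH
  choose g hg hFg using hF
  simp only [hFg] at hsub ⊢
  obtain ⟨i, hi⟩ := Submodule.exists_le_of_subset_iUnion (K := LinearMap.ker (f : X →ₗ[ℝ] ℝ))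
    f.isClosed_ker (fun i => (g i).isClosed_ker) hsub
  refine ⟨i, congrArg SetLike.coe (LinearMap.ker_eq_ker_of_le ?_ ?_ hi)⟩
  · exact fun h => hf (ContinuousLinearMap.coe_injective h)
  · exact fun h => hg i (ContinuousLinearMap.coe_injective h)

end
end

section
/- Let X be a real Banach space of dimension greater than 1. Then cof(X) = |X*|, the cardinality of the topological dual space X* of X. -/
open Cardinal Set

universe u v

noncomputable section

/-! By Baire's theorem a hyperplane covered by countably many hyperplanes is one of them, so each
member of `H_σ(X)` contains only countably many hyperplanes and a cofinal family `F` satisfies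
`#hyperplanes ≤ #F · ℵ₀`. The hyperplanes `ker (f + t • g)` of a pencil show there are at least `𝔠`
of them, and since a hyperplane determines its functional up to a scalar, there are exactly
`#X*` of them; hence `#X* ≤ #F`. Conversely the countable unions of hyperplanes form a cofinal
family of size at most `#X* ^ ℵ₀ = #X*`. The last equality holds in every real Banach space `E`:
if `S` is a maximal `1/2`-separated subset of the unit ball, the series `∑ rⁿ • sₙ` with `sₙ ∈ S`
cover the unit ball for `r = 1/2` and are pairwise distinct for `r = 1/5`, so `#E = #S ^ ℵ₀`. -/

open Metric Function
open scoped NNReal ENNReal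

section DualPairs

variable {R V : Type*} [Field R] [TopologicalSpace R] [IsTopologicalRing R]
  [AddCommGroup V] [TopologicalSpace V] [Module R V]

theorem ContinuousLinearMap.exists_eq_smul_of_setOf_eq_zero_subset {f g : V →L[R] R}
    (h : {x | f x = 0} ⊆ {x | g x = 0}) : ∃ c : R, g = c • f := by
  have hker : ⨅ _ : Unit, LinearMap.ker (f : V →ₗ[R] R) ≤ LinearMap.ker (g : V →ₗ[R] R) :=
    fun x hx => h (by simpa using hx)
  obtain ⟨c, hc⟩ := Submodule.mem_span_singleton.1
    (by simpa using mem_span_of_iInf_ker_le_ker hker)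
  exact ⟨c, ContinuousLinearMap.coe_injective (by simpa using hc.symm)⟩

theorem exists_biorthogonal_pair [SeparatingDual R V] (h : 1 < Module.rank R V) :
    ∃ (f g : V →L[R] R) (v w : V), f v = 1 ∧ f w = 0 ∧ g v = 0 ∧ g w = 1 := by
  have : Nontrivial V := rank_pos_iff_nontrivial.1 (zero_lt_one.trans h)
  obtain ⟨v, hv⟩ := exists_ne (0 : V)
  obtain ⟨w, hvw⟩ := exists_linearIndependent_pair_of_one_lt_rank h hv
  have hsurj := SeparatingDual.dualMap_surjective_iff.2
    (linearIndependent_iff_injective_fintypeLinearCombination.1 hvw)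
  obtain ⟨f, hf⟩ := hsurj (LinearMap.proj 0)
  obtain ⟨g, hg⟩ := hsurj (LinearMap.proj 1)
  refine ⟨f, g, v, w, ?_, ?_, ?_, ?_⟩
  · simpa using congr($hf (Pi.single 0 1))
  · simpa using congr($hf (Pi.single 1 1))
  · simpa using congr($hg (Pi.single 0 1))
  · simpa using congr($hg (Pi.single 1 1))

end DualPairs

theorem Submodule.exists_le_of_subset_iUnion_s4 {𝕜 E ι : Type*} [NontriviallyNormedField 𝕜]
    [AddCommGroup E] [TopologicalSpace E] [IsTopologicalAddGroup E] [Module 𝕜 E]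
    [ContinuousSMul 𝕜 E] [Countable ι] (p : Submodule 𝕜 E) [BaireSpace p]
    {q : ι → Submodule 𝕜 E} (hq : ∀ i, IsClosed (q i : Set E))
    (h : (p : Set E) ⊆ ⋃ i, (q i : Set E)) : ∃ i, p ≤ q i := by
  have hcover : ⋃ i, ((q i).comap p.subtype : Set p) = Set.univ :=
    eq_univ_of_forall fun x => by simpa using h x.2
  obtain ⟨i, hi⟩ := nonempty_interior_of_iUnion_of_closed
    (fun i => (hq i).preimage continuous_subtype_val) hcover
  have htop := ((q i).comap p.subtype).eq_top_of_nonempty_interior' hi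
  exact ⟨i, fun x hx => by simpa using htop.ge (Submodule.mem_top (x := ⟨x, hx⟩))⟩

section Hyperplanes

variable {X : Type u} [NormedAddCommGroup X] [NormedSpace ℝ X]

theorem IsHyperplane.eq_of_subset {H H' : Set X} (hH : IsHyperplane H) (hH' : IsHyperplane H')
    (h : H ⊆ H') : H = H' := by
  obtain ⟨f, -, rfl⟩ := hH
  obtain ⟨g, hg, rfl⟩ := hH'
  obtain ⟨c, rfl⟩ := ContinuousLinearMap.exists_eq_smul_of_setOf_eq_zero_subset h
  have hc : c ≠ 0 := by rintro rfl; exact hg (zero_smul ℝ f)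
  ext x
  simp [hc]

theorem IsHyperplane.mem_of_subset_sUnion [CompleteSpace X] {H : Set X} (hH : IsHyperplane H)
    {F : Set (Set X)} (hF : F.Countable) (hFH : ∀ H' ∈ F, IsHyperplane H') (h : H ⊆ ⋃₀ F) :
    H ∈ F := by
  obtain ⟨f, hf, rfl⟩ := hH
  choose g _ hg using fun H' : F => hFH H' H'.2
  have : Countable F := hF.to_subtype
  have : CompleteSpace (LinearMap.ker (f : X →ₗ[ℝ] ℝ)) := f.isClosed_ker.completeSpace_coe
  obtain ⟨H', hH'⟩ := (LinearMap.ker (f : X →ₗ[ℝ] ℝ)).exists_le_of_subset_iUnion_s4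
    (q := fun H' : F => LinearMap.ker (g H' : X →ₗ[ℝ] ℝ)) (fun H' => (g H').isClosed_ker) (by
      intro x hx
      obtain ⟨H', hH'F, hxH'⟩ := h hx
      rw [show H' = _ from hg ⟨H', hH'F⟩] at hxH'
      exact mem_iUnion.2 ⟨⟨H', hH'F⟩, hxH'⟩)
  have := (show IsHyperplane {x | f x = 0} from ⟨f, hf, rfl⟩).eq_of_subset (hFH H' H'.2)
    (by rw [hg]; exact hH')
  exact this ▸ H'.2

theorem InHyperplaneIdeal.countable_setOf_isHyperplane_subset [CompleteSpace X] {A : Set X}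
    (hA : InHyperplaneIdeal A) : {H | IsHyperplane H ∧ H ⊆ A}.Countable := by
  obtain ⟨F, hF, hFH, hAF⟩ := hA
  exact hF.mono fun H ⟨hH, hHA⟩ => hH.mem_of_subset_sUnion hF hFH (hHA.trans hAF)

theorem continuum_le_mk_setOf_isHyperplane (hdim : 1 < Module.rank ℝ X) :
    𝔠 ≤ #{H : Set X | IsHyperplane H} := by
  obtain ⟨f, g, v, w, hfv, hfw, hgv, hgw⟩ := exists_biorthogonal_pair hdim
  have hℓ : ∀ t : ℝ, f + t • g ≠ 0 := fun t h => by simpa [hfv, hgv] using congr($h v)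
  let pencil : ℝ → {H : Set X | IsHyperplane H} := fun t => ⟨_, f + t • g, hℓ t, rfl⟩
  have hpencil : Injective pencil := by
    intro s t hst
    obtain ⟨c, hc⟩ := ContinuousLinearMap.exists_eq_smul_of_setOf_eq_zero_subset
      (Subtype.ext_iff.1 hst).le
    have hv := congr($hc v)
    have hw := congr($hc w)
    simp [hfv, hfw, hgv, hgw] at hv hw
    subst hv
    simpa using hw.symm
  simpa [mk_real] using lift_mk_le_lift_mk_of_injective hpencil

end Hyperplanes

theorem Metric.exists_maximal_isSeparated {E : Type*} [PseudoEMetricSpace E] (ε : ℝ≥0∞)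
    (s : Set E) : ∃ N, Maximal (fun N => N ⊆ s ∧ IsSeparated ε N) N := by
  refine zorn_subset _ fun c hc hchain => ⟨⋃₀ c, ⟨sUnion_subset fun t ht => (hc ht).1, ?_⟩,
    fun t => subset_sUnion_of_mem⟩
  exact (pairwise_sUnion hchain.directedOn).2 fun t ht => (hc ht).2

section PowerAleph0

variable {E : Type*} [NormedAddCommGroup E] [NormedSpace ℝ E] {S : Set E}

theorem exists_hasSum_pow_smul_of_isCover {r : ℝ≥0} (hr : r < 1) (hS : S ⊆ closedBall 0 1)
    (hcov : IsCover r (closedBall 0 1) S) {y : E} (hy : ‖y‖ ≤ 1) :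
    ∃ σ : ℕ → S, HasSum (fun n => (r : ℝ) ^ n • (σ n : E)) y := by
  have step : ∀ z : closedBall (0 : E) 1,
      ∃ p : S × closedBall (0 : E) 1, (z : E) = p.1 + (r : ℝ) • (p.2 : E) := by
    rintro ⟨z, hz⟩
    obtain ⟨s, hs, hzs⟩ := hcov hz
    replace hzs : ‖z - s‖ ≤ r := by
      rw [← dist_eq_norm, dist_le_coe, ← edist_le_coe]; exact hzs
    refine ⟨(⟨s, hs⟩, ⟨(r : ℝ)⁻¹ • (z - s), ?_⟩), ?_⟩
    · rw [mem_closedBall_zero_iff, norm_smul, norm_inv, NNReal.norm_eq]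
      exact inv_mul_le_one_of_le₀ hzs r.2
    · rcases eq_or_ne r 0 with rfl | hr0
      · simpa [sub_eq_zero] using hzs
      · simp [smul_smul, hr0]
  choose next hnext using step
  let rem : ℕ → closedBall (0 : E) 1 := fun n => (Prod.snd ∘ next)^[n] ⟨y, by simpa using hy⟩
  refine ⟨fun n => (next (rem n)).1, ?_⟩
  have hrem : ∀ n, ∑ k ∈ Finset.range n, (r : ℝ) ^ k • ((next (rem k)).1 : E)
      = y - (r : ℝ) ^ n • (rem n : E) := by
    intro n
    induction n with
    | zero => simp [rem]
    | succ n ih =>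
      rw [Finset.sum_range_succ, ih, hnext (rem n)]
      simp only [rem, iterate_succ_apply', comp_apply, pow_succ, mul_smul, smul_add]
      abel
  have hbound : ∀ n, ∀ x ∈ closedBall (0 : E) 1, ‖(r : ℝ) ^ n • x‖ ≤ (r : ℝ) ^ n :=
    fun n x hx => by
      simpa [norm_smul] using
        mul_le_of_le_one_right (pow_nonneg r.2 n) (mem_closedBall_zero_iff.1 hx)
  rw [hasSum_iff_tendsto_nat_of_summable_norm (.of_nonneg_of_le (fun _ => norm_nonneg _)
    (fun n => hbound n _ (hS (next (rem n)).1.2)) (summable_geometric_of_lt_one r.2 hr)),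
    funext hrem]
  simpa using tendsto_const_nhds.sub (squeeze_zero_norm (fun n => hbound n _ (rem n).2)
    (tendsto_pow_atTop_nhds_zero_of_lt_one r.2 hr))

theorem injective_tsum_pow_smul_of_isSeparated [CompleteSpace E] {δ : ℝ≥0} {q : ℝ} (hq : 0 < q)
    (hqδ : 2 * q ≤ δ * (1 - q)) (hS : S ⊆ closedBall 0 1) (hsep : IsSeparated δ S) :
    Injective fun σ : ℕ → S => ∑' n, q ^ n • (σ n : E) := by
  have hq1 : q < 1 := by nlinarith [δ.2]
  have hbound : ∀ (σ : ℕ → S) k, ‖q ^ k • (σ k : E)‖ ≤ q ^ k := fun σ k => by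
    simpa [norm_smul, abs_of_pos hq] using
      mul_le_of_le_one_right (pow_nonneg hq.le k) (mem_closedBall_zero_iff.1 (hS (σ k).2))
  have hsummable : ∀ σ : ℕ → S, Summable fun k => q ^ k • (σ k : E) := fun σ =>
    .of_norm_bounded (summable_geometric_of_lt_one hq.le hq1) (hbound σ)
  intro σ τ hστ
  funext n
  induction n using Nat.strong_induction_on with
  | _ n ih =>
  by_contra hne
  set d : ℕ → E := fun k => q ^ k • (σ k : E) - q ^ k • (τ k : E) with hd_def
  have hd : ∀ k, ‖d k‖ ≤ 2 * q ^ k := fun k =>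
    (norm_sub_le _ _).trans (by linarith [hbound σ k, hbound τ k])
  have hsum : ∑' k, d k = 0 := by
    rw [hd_def, (hsummable σ).tsum_sub (hsummable τ)]
    exact sub_eq_zero.2 hστ
  have htail : d n = -∑' k, d (k + (n + 1)) := by
    have := ((hsummable σ).sub (hsummable τ)).sum_add_tsum_nat_add (n + 1)
    rw [hsum, Finset.sum_range_succ, Finset.sum_eq_zero fun k hk => by
      simp [ih k (Finset.mem_range.1 hk)], zero_add] at this
    exact eq_neg_of_add_eq_zero_left this
  have hupper : ‖d n‖ ≤ 2 * q ^ (n + 1) * (1 - q)⁻¹ := by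
    rw [htail, norm_neg]
    refine tsum_of_norm_bounded
      ((hasSum_geometric_of_lt_one hq.le hq1).mul_left (2 * q ^ (n + 1))) fun k => ?_
    simpa [pow_add, mul_comm, mul_left_comm, mul_assoc] using hd (k + (n + 1))
  have hlower : q ^ n * δ < ‖d n‖ := by
    have hδ : (δ : ℝ) < ‖(σ n : E) - τ n‖ := by
      have : (δ : ℝ≥0∞) < edist (σ n : E) (τ n) :=
        hsep (σ n).2 (τ n).2 fun h => hne (Subtype.ext h)
      rwa [edist_nndist, ENNReal.coe_lt_coe, ← NNReal.coe_lt_coe, coe_nndist, dist_eq_norm] at this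
    simp only [hd_def]
    rw [← smul_sub, norm_smul, norm_pow, Real.norm_of_nonneg hq.le]
    exact mul_lt_mul_of_pos_left hδ (pow_pos hq n)
  have := hlower.trans_le hupper
  rw [lt_mul_inv_iff₀ (sub_pos.2 hq1), pow_succ] at this
  nlinarith [pow_pos hq n]

end PowerAleph0

theorem mk_power_aleph0_of_completeSpace (E : Type*) [NormedAddCommGroup E] [NormedSpace ℝ E]
    [CompleteSpace E] : #E ^ ℵ₀ = #E := by
  obtain ⟨S, hS⟩ := exists_maximal_isSeparated ((1 / 2 : ℝ≥0) : ℝ≥0∞) (closedBall (0 : E) 1)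
  have hcov := IsCover.of_maximal_isSeparated hS
  have hnat : #(ℕ → S) = #S ^ ℵ₀ := by simp
  have hle : #E ≤ #S ^ ℵ₀ := calc
    #E = #(ball (0 : E) 1) := mk_congr Homeomorph.unitBall.toEquiv
    _ ≤ #(closedBall (0 : E) 1) := mk_le_mk_of_subset ball_subset_closedBall
    _ ≤ #(range fun σ : ℕ → S => ∑' n, ((1 / 2 : ℝ≥0) : ℝ) ^ n • (σ n : E)) :=
      mk_le_mk_of_subset fun y hy =>
        (exists_hasSum_pow_smul_of_isCover (by norm_num) hS.1.1 hcov
          (mem_closedBall_zero_iff.1 hy)).imp fun _ hσ => hσ.tsum_eq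
    _ ≤ #S ^ ℵ₀ := hnat ▸ mk_range_le
  have hge : #S ^ ℵ₀ ≤ #E := hnat ▸ mk_le_of_injective
    (injective_tsum_pow_smul_of_isSeparated (q := 1 / 5) (by norm_num) (by norm_num) hS.1.1 hS.1.2)
  refine le_antisymm ?_ (self_le_power _ one_le_aleph0)
  calc #E ^ ℵ₀ ≤ (#S ^ ℵ₀) ^ ℵ₀ := power_le_power_right hle
    _ = #S ^ ℵ₀ := by rw [← power_mul, aleph0_mul_aleph0]
    _ ≤ #E := hge

section Base

variable {X : Type u} [NormedAddCommGroup X] [NormedSpace ℝ X]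

def IsHyperplaneIdealBase (F : Set (Set X)) : Prop :=
  (∀ A ∈ F, InHyperplaneIdeal A) ∧ ∀ Y : Set X, InHyperplaneIdeal Y → ∃ A ∈ F, Y ⊆ A

theorem isHyperplaneIdealBase_range_iUnion [Nonempty {H : Set X | IsHyperplane H}] :
    IsHyperplaneIdealBase
      (range fun σ : ℕ → {H : Set X | IsHyperplane H} => ⋃ n, (σ n : Set X)) := by
  refine ⟨?_, ?_⟩
  · rintro _ ⟨σ, rfl⟩
    refine ⟨range fun n => (σ n : Set X), countable_range _, ?_, by rw [sUnion_range]⟩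
    rintro _ ⟨n, rfl⟩
    exact (σ n).2
  · rintro Y ⟨F, hF, hFH, hYF⟩
    have hF' : (((↑) : {H : Set X | IsHyperplane H} → Set X) ⁻¹' F).Countable :=
      hF.preimage Subtype.val_injective
    obtain ⟨σ, hσ⟩ := countable_iff_exists_subset_range.1 hF'
    refine ⟨_, ⟨σ, rfl⟩, hYF.trans ?_⟩
    rintro x ⟨H, hHF, hxH⟩
    obtain ⟨n, hn⟩ := hσ (show (⟨H, hFH H hHF⟩ : {H : Set X | IsHyperplane H}) ∈ _ from hHF)
    exact mem_iUnion.2 ⟨n, by rwa [hn]⟩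

theorem cofH_le_mk_of_isHyperplaneIdealBase {F : Set (Set X)} (hF : IsHyperplaneIdealBase F) :
    cofH X ≤ #F :=
  csInf_le' ⟨F, hF.1, hF.2, rfl⟩

theorem exists_isHyperplaneIdealBase_mk_eq_cofH {F : Set (Set X)}
    (hF : IsHyperplaneIdealBase F) : ∃ G : Set (Set X), IsHyperplaneIdealBase G ∧ #G = cofH X := by
  obtain ⟨G, hG, hGcof, hGc⟩ : cofH X ∈ _ := csInf_mem ⟨_, F, hF.1, hF.2, rfl⟩
  exact ⟨G, ⟨hG, hGcof⟩, hGc⟩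

theorem mk_setOf_isHyperplane_le_of_isHyperplaneIdealBase [CompleteSpace X] {F : Set (Set X)}
    (hF : IsHyperplaneIdealBase F) (hT : ℵ₀ < #{H : Set X | IsHyperplane H}) :
    #{H : Set X | IsHyperplane H} ≤ #F := by
  have hcover : {H : Set X | IsHyperplane H} ⊆ ⋃ A ∈ F, {H | IsHyperplane H ∧ H ⊆ A} := by
    intro H hH
    obtain ⟨A, hAF, hHA⟩ := hF.2 H ⟨{H}, countable_singleton H, by simpa using hH, by simp⟩
    exact mem_biUnion hAF ⟨hH, hHA⟩
  have hle : #{H : Set X | IsHyperplane H} ≤ #F * ℵ₀ :=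
    (mk_le_mk_of_subset hcover).trans <| (mk_biUnion_le _ _).trans <| mul_le_mul_right
      (ciSup_le' fun A : F => (hF.1 A A.2).countable_setOf_isHyperplane_subset.le_aleph0) _
  by_contra! hlt
  exact (hle.trans (mul_le_max _ _)).not_gt (max_lt (max_lt hlt hT) hT)

end Base

section Dual

variable {X : Type u} [NormedAddCommGroup X] [NormedSpace ℝ X]

theorem mk_setOf_isHyperplane_le_mk_dual : #{H : Set X | IsHyperplane H} ≤ #(X →L[ℝ] ℝ) :=
  (mk_le_mk_of_subset (show {H : Set X | IsHyperplane H} ⊆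
    range fun f : X →L[ℝ] ℝ => {x | f x = 0} from fun _ ⟨f, _, hf⟩ => ⟨f, hf.symm⟩)).trans
    mk_range_le

theorem mk_dual_le_mk_range_mul_continuum :
    #(X →L[ℝ] ℝ) ≤ #(range fun f : X →L[ℝ] ℝ => {x | f x = 0}) * 𝔠 := by
  refine mk_le_mk_mul_of_mk_preimage_le (rangeFactorization _) ?_
  rintro ⟨_, g, rfl⟩
  have hfiber : rangeFactorization (fun f : X →L[ℝ] ℝ => {x | f x = 0}) ⁻¹' {⟨_, g, rfl⟩} ⊆
      range fun c : ℝ => c • g := fun f hf =>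
    (ContinuousLinearMap.exists_eq_smul_of_setOf_eq_zero_subset
      (congrArg Subtype.val hf).ge).imp fun _ hc => hc.symm
  exact (mk_le_mk_of_subset hfiber).trans
    (by simpa [mk_real] using mk_range_le_lift (f := fun c : ℝ => c • g))

theorem mk_dual_le_mk_setOf_isHyperplane (hT : 𝔠 ≤ #{H : Set X | IsHyperplane H}) :
    #(X →L[ℝ] ℝ) ≤ #{H : Set X | IsHyperplane H} := by
  have hT₀ : ℵ₀ ≤ #{H : Set X | IsHyperplane H} := aleph0_le_continuum.trans hT
  have hrange : (range fun f : X →L[ℝ] ℝ => {x | f x = 0}) ⊆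
      insert Set.univ {H : Set X | IsHyperplane H} := by
    rintro _ ⟨f, rfl⟩
    rcases eq_or_ne f 0 with rfl | hf
    · simp
    · exact mem_insert_of_mem _ ⟨f, hf, rfl⟩
  calc #(X →L[ℝ] ℝ) ≤ #(range fun f : X →L[ℝ] ℝ => {x | f x = 0}) * 𝔠 :=
        mk_dual_le_mk_range_mul_continuum
    _ ≤ (#{H : Set X | IsHyperplane H} + 1) * 𝔠 :=
        mul_le_mul_left ((mk_le_mk_of_subset hrange).trans mk_insert_le) _
    _ = #{H : Set X | IsHyperplane H} := by
        rw [add_one_eq hT₀, mul_eq_left hT₀ hT continuum_ne_zero]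

end Dual

/-- cof(X) = |X*| for any Banach space of dimension > 1. -/
theorem stmt4 (X : Type u) [NormedAddCommGroup X] [NormedSpace ℝ X] [CompleteSpace X]
    (hdim : 1 < Module.rank ℝ X) :
    cofH X = #(X →L[ℝ] ℝ) := by
  have hT := continuum_le_mk_setOf_isHyperplane (X := X) hdim
  have : Nonempty {H : Set X | IsHyperplane H} :=
    mk_ne_zero_iff.1 (continuum_pos.trans_le hT).ne'
  have hB := isHyperplaneIdealBase_range_iUnion (X := X)
  refine le_antisymm ?_ ?_
  · calc cofH X ≤ #(range fun σ : ℕ → {H : Set X | IsHyperplane H} => ⋃ n, (σ n : Set X)) :=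
          cofH_le_mk_of_isHyperplaneIdealBase hB
      _ ≤ #{H : Set X | IsHyperplane H} ^ ℵ₀ := mk_range_le.trans (by simp)
      _ ≤ #(X →L[ℝ] ℝ) ^ ℵ₀ := power_le_power_right mk_setOf_isHyperplane_le_mk_dual
      _ = #(X →L[ℝ] ℝ) := mk_power_aleph0_of_completeSpace _
  · obtain ⟨F, hF, hFc⟩ := exists_isHyperplaneIdealBase_mk_eq_cofH hB
    calc #(X →L[ℝ] ℝ) ≤ #{H : Set X | IsHyperplane H} := mk_dual_le_mk_setOf_isHyperplane hT
      _ ≤ #F := mk_setOf_isHyperplane_le_of_isHyperplaneIdealBase hF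
          (aleph0_lt_continuum.trans_le hT)
      _ = cofH X := hFc
end
end

section
/- For every nonseparable real Banach space X there is a bounded linear operator T : X → ℓ∞(Γ), where Γ is a set of cardinality ℵ₁, whose range is nonseparable. -/
/-!
Transfinite recursion along a well-order of `Γ` with countable initial segments: at stage `γ` the
closed span of the points already chosen is separable, hence a proper subspace, so Hahn–Banach gives
a point `x γ` and a functional `f γ` of norm at most `1` with `f γ (x γ) = 1` that kills all earlier
points. The operator `x ↦ (f γ x)_γ` then sends the `x γ` to an uncountable family at mutual
distance at least `1` in `ℓ∞(Γ)`, and such a family lies in no separable set.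
-/

open Cardinal Set

universe u v

noncomputable section

open TopologicalSpace Metric
open scoped NNReal

theorem WellFounded.exists_forall_image_of_countable {I α : Type*} {r : I → I → Prop}
    (hr : WellFounded r) (hI : ∀ a, {b | r b a}.Countable) (P : Set α → α → Prop)
    (h : ∀ s : Set α, s.Countable → ∃ x, P s x) :
    ∃ g : I → α, ∀ a, P (g '' {b | r b a}) (g a) := by
  have : Nonempty α := let ⟨x, _⟩ := h ∅ countable_empty; ⟨x⟩
  choose! pick hpick using h
  let g : I → α := hr.fix fun a ih => pick (range fun b : {b // r b a} => ih b b.2)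
  have hg : ∀ a, g a = pick (g '' {b | r b a}) := fun a => by
    rw [image_eq_range]
    exact hr.fix_eq _ _
  exact ⟨g, fun a => hg a ▸ hpick _ ((hI a).image g)⟩

section Dual

variable {𝕜 E : Type*} [RCLike 𝕜] [SeminormedAddCommGroup E] [NormedSpace 𝕜 E]

theorem Submodule.exists_dual_vector_infDist (p : Submodule 𝕜 E) (z : E) :
    ∃ f : StrongDual 𝕜 E, ‖f‖ ≤ 1 ∧ f z = infDist z p ∧ ∀ y ∈ p, f y = 0 := by
  obtain ⟨g, hg, hgz⟩ := exists_dual_vector'' 𝕜 (p.mkQ z)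
  refine ⟨g.comp p.mkQL, ?_, ?_, fun y hy => ?_⟩
  · refine ContinuousLinearMap.opNorm_le_bound _ zero_le_one fun x => ?_
    calc ‖g (p.mkQ x)‖ ≤ ‖g‖ * ‖p.mkQ x‖ := g.le_opNorm _
      _ ≤ 1 * ‖x‖ := mul_le_mul hg (Submodule.Quotient.norm_mk_le p x) (norm_nonneg _) zero_le_one
  · rw [ContinuousLinearMap.comp_apply, Submodule.coe_mkQL, hgz]
    exact congrArg _ (QuotientAddGroup.norm_mk (S := p.toAddSubgroup) z)
  · simp [(Submodule.Quotient.mk_eq_zero p).2 hy]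

theorem exists_dual_eq_one_vanishing_on_countable (hE : ¬ SeparableSpace E) {s : Set E}
    (hs : s.Countable) : ∃ (x : E) (f : StrongDual 𝕜 E), ‖f‖ ≤ 1 ∧ f x = 1 ∧ ∀ y ∈ s, f y = 0 := by
  let p := Submodule.span 𝕜 s
  obtain ⟨z, hz⟩ : ∃ z, z ∉ closure (p : Set E) := by
    by_contra! h
    exact hE (isSeparable_univ_iff.1 <| (eq_univ_of_forall h) ▸ hs.isSeparable.span.closure)
  have hd : 0 < infDist z p := (infDist_pos_iff_notMem_closure ⟨0, p.zero_mem⟩).1 hz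
  obtain ⟨f, hf, hfz, hfp⟩ := p.exists_dual_vector_infDist z
  refine ⟨((infDist z p)⁻¹ : 𝕜) • z, f, hf, ?_, fun y hy => hfp y (Submodule.subset_span hy)⟩
  rw [map_smul, hfz, smul_eq_mul, ← RCLike.ofReal_inv, ← RCLike.ofReal_mul, inv_mul_cancel₀ hd.ne',
    RCLike.ofReal_one]

theorem exists_dual_family_of_not_separableSpace (hE : ¬ SeparableSpace E) {I : Type*}
    {r : I → I → Prop} (hr : WellFounded r) (hI : ∀ a, {b | r b a}.Countable) :
    ∃ (x : I → E) (f : I → StrongDual 𝕜 E), (∀ a, ‖f a‖ ≤ 1) ∧ (∀ a, f a (x a) = 1) ∧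
      ∀ a b, r a b → f b (x a) = 0 := by
  obtain ⟨g, hg⟩ := hr.exists_forall_image_of_countable hI
    (fun s (p : E × StrongDual 𝕜 E) => ‖p.2‖ ≤ 1 ∧ p.2 p.1 = 1 ∧ ∀ y ∈ Prod.fst '' s, p.2 y = 0)
    fun s hs => by
      obtain ⟨x, f, hfx⟩ :=
        exists_dual_eq_one_vanishing_on_countable (𝕜 := 𝕜) hE (hs.image Prod.fst)
      exact ⟨(x, f), hfx⟩
  exact ⟨fun a => (g a).1, fun a => (g a).2, fun a => (hg a).1, fun a => (hg a).2.1,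
    fun a b hab => (hg b).2.2 _ ⟨g a, mem_image_of_mem g hab, rfl⟩⟩

end Dual

namespace ContinuousLinearMap

variable {𝕜 E ι : Type*} {F : ι → Type*} [NontriviallyNormedField 𝕜] [SeminormedAddCommGroup E]
  [NormedSpace 𝕜 E] [∀ i, NormedAddCommGroup (F i)] [∀ i, NormedSpace 𝕜 (F i)]

def lpInftyPi (f : ∀ i, E →L[𝕜] F i) {C : ℝ≥0} (hf : ∀ i, ‖f i‖ ≤ C) : E →L[𝕜] lp F ⊤ :=
  LinearMap.mkContinuous
    { toFun := fun x => ⟨fun i => f i x, memℓp_infty ⟨C * ‖x‖, by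
        rintro _ ⟨i, rfl⟩
        exact (f i).le_of_opNorm_le (hf i) x⟩⟩
      map_add' := fun x y => lp.ext <| funext fun i => map_add (f i) x y
      map_smul' := fun c x => lp.ext <| funext fun i => map_smul (f i) c x }
    C fun x => lp.norm_le_of_forall_le (by positivity) fun i => (f i).le_of_opNorm_le (hf i) x

@[simp]
theorem lpInftyPi_apply (f : ∀ i, E →L[𝕜] F i) {C : ℝ≥0} (hf : ∀ i, ‖f i‖ ≤ C) (x : E) (i : ι) :
    (lpInftyPi f hf x : ∀ i, F i) i = f i x :=
  rfl

theorem norm_sub_le_dist_lpInftyPi (f : ∀ i, E →L[𝕜] F i) {C : ℝ≥0} (hf : ∀ i, ‖f i‖ ≤ C)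
    (x y : E) (i : ι) : ‖f i x - f i y‖ ≤ dist (lpInftyPi f hf x) (lpInftyPi f hf y) := by
  rw [dist_eq_norm, ← map_sub, ← map_sub, ← lpInftyPi_apply f hf]
  exact lp.norm_apply_le_norm ENNReal.top_ne_zero _ i

end ContinuousLinearMap

theorem not_isSeparable_of_pairwise_le_dist {α ι : Type*} [PseudoMetricSpace α] [Uncountable ι]
    {u : ι → α} {s : Set α} {ε : ℝ} (hε : 0 < ε) (hu : Pairwise fun i j => ε ≤ dist (u i) (u j))
    (hs : range u ⊆ s) : ¬ IsSeparable s := by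
  rintro ⟨c, hc, hsc⟩
  have hnear : ∀ i, ∃ y ∈ c, dist (u i) y < ε / 2 := fun i =>
    mem_closure_iff.1 (hsc (hs ⟨i, rfl⟩)) _ (half_pos hε)
  choose d hdc hd using hnear
  have hinj : Function.Injective fun i => (⟨d i, hdc i⟩ : c) := by
    intro i j hij
    by_contra hne
    have hdij : d i = d j := congrArg Subtype.val hij
    linarith [hu hne, dist_triangle_right (u i) (u j) (d i), hd i, hdij ▸ hd j]
  have := hc.to_subtype
  exact not_countable hinj.countable

theorem stmt8_general (X : Type u) [NormedAddCommGroup X] [NormedSpace ℝ X]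
    (hsep : ¬ TopologicalSpace.SeparableSpace X)
    (Γ : Type v) (hΓ : #Γ = Cardinal.aleph 1) :
    ∃ T : X →L[ℝ] lp (fun _ : Γ => ℝ) ⊤,
      ¬ TopologicalSpace.IsSeparable (Set.range fun x => T x) := by
  obtain ⟨r, hr, hord⟩ := Cardinal.exists_ord_eq Γ
  have hI : ∀ γ, {δ | r δ γ}.Countable := fun γ => by
    have h := card_typein_lt γ hord
    rw [Ordinal.card_typein, hΓ] at h
    exact le_aleph0_iff_set_countable.1 (lt_aleph_one_iff.1 h)
  have : Uncountable Γ := aleph0_lt_mk_iff.1 (hΓ ▸ aleph0_lt_aleph_one)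
  obtain ⟨x, f, hf, hfx, hfr⟩ := exists_dual_family_of_not_separableSpace (𝕜 := ℝ) hsep hr.wf hI
  let T := ContinuousLinearMap.lpInftyPi f (C := 1) (by simpa using hf)
  have hdist : ∀ γ δ, r γ δ → 1 ≤ dist (T (x γ)) (T (x δ)) := fun γ δ h => by
    simpa [hfx, hfr γ δ h] using ContinuousLinearMap.norm_sub_le_dist_lpInftyPi f _ (x γ) (x δ) δ
  refine ⟨T, not_isSeparable_of_pairwise_le_dist one_pos (u := fun γ => T (x γ)) ?_
    (range_comp_subset_range _ _)⟩
  intro γ δ hne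
  rcases trichotomous_of r γ δ with h | h | h
  · exact hdist γ δ h
  · exact absurd h hne
  · exact dist_comm (T (x γ)) _ ▸ hdist δ γ h

/-- every nonseparable Banach space admits a bounded operator into ℓ∞(Γ),
|Γ| = ℵ₁, with nonseparable range. -/
theorem stmt8 (X : Type u) [NormedAddCommGroup X] [NormedSpace ℝ X] [CompleteSpace X]
    (hsep : ¬ TopologicalSpace.SeparableSpace X)
    (Γ : Type v) (hΓ : #Γ = Cardinal.aleph 1) :
    ∃ T : X →L[ℝ] lp (fun _ : Γ => ℝ) ⊤,
      ¬ TopologicalSpace.IsSeparable (Set.range fun x => T x) :=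
  stmt8_general X hsep Γ hΓ

end
end

section
/- Let X be a nonseparable real Banach space and let Γ be a set of cardinality ℵ₁. If there is a bounded linear operator T : X → c₀(Γ) whose range is nonseparable, then cov(X) = ℵ₁. -/
open Cardinal Set

universe u v

noncomputable section

/-!
Hyperplanes are closed and nowhere dense, so by the Baire category theorem countably many of
them never cover a Banach space, and every cover by sets of `H_σ(X)` has at least `ℵ₁` members.
Conversely, let `S` be the set of `γ` for which `x ↦ (T x) γ` is a nonzero functional. If `S`
were countable, the range of `T` would lie in the separable set of functions supported in `S`;
so `S` is uncountable. As every `T x` has countable support, it vanishes at some `γ ∈ S`, hence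
the at most `ℵ₁` kernels of these functionals cover `X`.
-/

open Filter Function Topology TopologicalSpace
open scoped ZeroAtInfty

section Hyperplanes

variable {X : Type u} [NormedAddCommGroup X] [NormedSpace ℝ X]

lemma IsHyperplane.isNowhereDense {H : Set X} (hH : IsHyperplane H) : IsNowhereDense H := by
  obtain ⟨f, hf, rfl⟩ := hH
  rw [(isClosed_eq f.continuous continuous_const).isNowhereDense_iff, ← not_nonempty_iff_eq_empty]
  intro hint
  have hker : LinearMap.ker (f : X →ₗ[ℝ] ℝ) = ⊤ := Submodule.eq_top_of_nonempty_interior' _ hint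
  exact hf (ContinuousLinearMap.coe_injective (LinearMap.ker_eq_top.mp hker))

lemma InHyperplaneIdeal.isMeagre {Y : Set X} (hY : InHyperplaneIdeal Y) : IsMeagre Y := by
  obtain ⟨F, hFc, hFH, hYF⟩ := hY
  exact isMeagre_iff_countable_union_isNowhereDense.mpr
    ⟨F, fun H hH => (hFH H hH).isNowhereDense, hFc, hYF⟩

lemma aleph_one_le_mk_of_sUnion_eq_univ [CompleteSpace X] {F : Set (Set X)}
    (hF : ∀ A ∈ F, InHyperplaneIdeal A) (hcover : ⋃₀ F = Set.univ) : ℵ₁ ≤ #F := by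
  refine aleph_one_le_iff.mpr (aleph0_lt_mk_iff.mpr ⟨fun hFc => ?_⟩)
  have hmeagre : IsMeagre (⋃₀ F) := by
    rw [sUnion_eq_biUnion]
    exact isMeagre_biUnion (countable_coe_iff.mp hFc) fun A hA => (hF A hA).isMeagre
  rw [hcover] at hmeagre
  exact not_isMeagre_of_isOpen isOpen_univ univ_nonempty hmeagre

lemma covH_eq_aleph_one [CompleteSpace X] {F : Set (Set X)}
    (hF : ∀ A ∈ F, InHyperplaneIdeal A) (hcover : ⋃₀ F = Set.univ) (hcard : #F ≤ ℵ₁) :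
    covH X = ℵ₁ := by
  have hmem : ℵ₁ ∈ {c | ∃ F : Set (Set X), (∀ A ∈ F, InHyperplaneIdeal A) ∧ ⋃₀ F = Set.univ ∧
      #F = c} :=
    ⟨F, hF, hcover, hcard.antisymm (aleph_one_le_mk_of_sUnion_eq_univ hF hcover)⟩
  refine (csInf_le' hmem).antisymm (le_csInf ⟨_, hmem⟩ ?_)
  rintro _ ⟨F', hF', hcover', rfl⟩
  exact aleph_one_le_mk_of_sUnion_eq_univ hF' hcover'

lemma covH_eq_aleph_one_of_forall_exists_apply_eq_zero [CompleteSpace X] {ι : Type v}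
    (φ : ι → X →L[ℝ] ℝ) (hφ : ∀ i, φ i ≠ 0) (hι : #ι ≤ ℵ₁)
    (hcover : ∀ x, ∃ i, φ i x = 0) : covH X = ℵ₁ := by
  refine covH_eq_aleph_one (F := range fun i => {x | φ i x = 0}) ?_ ?_ ?_
  · rintro _ ⟨i, rfl⟩
    exact ⟨{{x | φ i x = 0}}, countable_singleton _, by simpa using ⟨φ i, hφ i, rfl⟩,
      subset_sUnion_of_mem rfl⟩
  · refine eq_univ_of_forall fun x => ?_
    obtain ⟨i, hi⟩ := hcover x
    exact ⟨_, ⟨i, rfl⟩, hi⟩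
  · rw [← lift_le_aleph_one.{u, v}]
    exact mk_range_le_lift.trans (lift_le_aleph_one.mpr hι)

end Hyperplanes

namespace ZeroAtInftyContinuousMap

section Support

variable {Γ : Type v} [TopologicalSpace Γ] [DiscreteTopology Γ]

lemma tendsto_cofinite {β : Type*} [TopologicalSpace β] [Zero β] (g : C₀(Γ, β)) :
    Tendsto g cofinite (𝓝 0) := by
  simpa [cocompact_eq_cofinite] using g.zero_at_infty'

lemma countable_support {β : Type*} [TopologicalSpace β] [Zero β] [FirstCountableTopology β]
    [T1Space β] (g : C₀(Γ, β)) : (support g).Countable := by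
  rw [support_eq_preimage, preimage_compl]
  simpa only [ker_nhds] using g.tendsto_cofinite.countable_compl_preimage_ker

lemma finite_setOf_le_norm {β : Type*} [NormedAddCommGroup β] (g : C₀(Γ, β)) {ε : ℝ}
    (hε : 0 < ε) : {γ | ε ≤ ‖g γ‖}.Finite := by
  simpa using Filter.eventually_cofinite.mp
    (g.tendsto_cofinite.eventually (eventually_norm_sub_lt 0 hε))

def extendByZero (t : Finset Γ) : (t → ℝ) →ₗ[ℝ] C₀(Γ, ℝ) where
  toFun φ :=
    { toFun := extend Subtype.val φ 0
      continuous_toFun := continuous_of_discreteTopology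
      zero_at_infty' := by
        rw [cocompact_eq_cofinite]
        refine tendsto_const_nhds.congr' ?_
        filter_upwards [t.finite_toSet.eventually_cofinite_notMem] with γ hγ
        refine (extend_apply' (f := Subtype.val) φ 0 γ ?_).symm
        rintro ⟨γ', rfl⟩
        exact hγ γ'.2 }
  map_add' φ ψ := by
    ext γ
    by_cases hγ : ∃ γ' : t, ↑γ' = γ
    · obtain ⟨γ', rfl⟩ := hγ
      simp
    · simp [extend_apply' _ _ _ hγ]
  map_smul' c φ := by
    ext γ
    by_cases hγ : ∃ γ' : t, ↑γ' = γ
    · obtain ⟨γ', rfl⟩ := hγ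
      simp
    · simp [extend_apply' _ _ _ hγ]

@[simp]
lemma extendByZero_apply_coe (t : Finset Γ) (φ : t → ℝ) (γ : t) : extendByZero t φ γ = φ γ :=
  Subtype.val_injective.extend_apply _ _ _

lemma extendByZero_apply_of_notMem {t : Finset Γ} (φ : t → ℝ) {γ : Γ} (hγ : γ ∉ t) :
    extendByZero t φ γ = 0 :=
  extend_apply' _ _ _ (by rintro ⟨γ', rfl⟩; exact hγ γ'.2)

lemma dist_extendByZero_le (g : C₀(Γ, ℝ)) (t : Finset Γ) {ε : ℝ} (hε : 0 ≤ ε)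
    (hg : ∀ γ ∉ t, ‖g γ‖ ≤ ε) : dist g (extendByZero t fun γ => g γ) ≤ ε := by
  rw [← dist_toBCF_eq_dist, BoundedContinuousFunction.dist_le hε]
  intro γ
  change dist (g γ) (extendByZero t (fun γ => g γ) γ) ≤ ε
  by_cases hγ : γ ∈ t
  · change dist (g (⟨γ, hγ⟩ : t)) (extendByZero t _ (⟨γ, hγ⟩ : t)) ≤ ε
    rwa [extendByZero_apply_coe, dist_self]
  · simpa [extendByZero_apply_of_notMem _ hγ] using hg γ hγ

lemma isSeparable_setOf_support_subset {S : Set Γ} (hS : S.Countable) :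
    IsSeparable {g : C₀(Γ, ℝ) | support g ⊆ S} := by
  set D := ⋃ t : {t : Finset Γ | ↑t ⊆ S}, range (extendByZero t.1)
  have : Countable {t : Finset Γ | ↑t ⊆ S} := Countable.to_subtype <|
    ((countable_ofPred_finite_subset hS).preimage Finset.coe_injective).mono
      fun t ht => by exact ⟨t.finite_toSet, ht⟩
  have hD : IsSeparable D := IsSeparable.iUnion fun t =>
    isSeparable_range (LinearMap.continuous_of_finiteDimensional _)
  refine hD.closure.mono fun g hg => Metric.mem_closure_iff.mpr fun ε hε => ?_
  have hfin := g.finite_setOf_le_norm (half_pos hε)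
  refine ⟨extendByZero hfin.toFinset fun γ => g γ,
    mem_iUnion.mpr ⟨⟨hfin.toFinset, ?_⟩, mem_range_self _⟩, ?_⟩
  · intro γ hγ
    refine hg fun hzero => ?_
    simp [hzero] at hγ
    linarith
  · refine (g.dist_extendByZero_le _ (half_pos hε).le fun γ hγ => ?_).trans_lt (half_lt_self hε)
    simpa using (not_le.mp (hfin.mem_toFinset.not.mp hγ)).le

end Support

def evalCLM {α 𝕜 β : Type*} [TopologicalSpace α] [NormedField 𝕜] [NormedAddCommGroup β]
    [NormedSpace 𝕜 β] (a : α) : C₀(α, β) →L[𝕜] β :=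
  LinearMap.mkContinuous
    { toFun := fun g => g a
      map_add' := fun _ _ => rfl
      map_smul' := fun _ _ => rfl }
    1 fun g => by simpa [← norm_toBCF_eq_norm] using g.toBCF.norm_coe_le_norm a

lemma not_countable_setOf_evalCLM_comp_ne_zero {Γ : Type v} [TopologicalSpace Γ]
    [DiscreteTopology Γ] {E : Type*} [NormedAddCommGroup E] [NormedSpace ℝ E]
    (T : E →L[ℝ] C₀(Γ, ℝ)) (hT : ¬ IsSeparable (range T)) :
    ¬ {γ | (evalCLM γ).comp T ≠ 0}.Countable := fun hS => hT <|
  (isSeparable_setOf_support_subset hS).mono <| by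
    rintro _ ⟨x, rfl⟩ γ hγ
    by_contra hγS
    exact hγ (DFunLike.congr_fun (not_not.mp hγS) x)

end ZeroAtInftyContinuousMap

theorem stmt11_general (X : Type u) [NormedAddCommGroup X] [NormedSpace ℝ X] [CompleteSpace X]
    (Γ : Type v) [TopologicalSpace Γ] [DiscreteTopology Γ] (hΓ : #Γ = Cardinal.aleph 1)
    (T : X →L[ℝ] ZeroAtInftyContinuousMap Γ ℝ)
    (hns : ¬ TopologicalSpace.IsSeparable (Set.range fun x => T x)) :
    covH X = Cardinal.aleph 1 := by
  set S := {γ | (ZeroAtInftyContinuousMap.evalCLM γ).comp T ≠ 0}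
  have hS : ¬ S.Countable :=
    ZeroAtInftyContinuousMap.not_countable_setOf_evalCLM_comp_ne_zero T hns
  refine covH_eq_aleph_one_of_forall_exists_apply_eq_zero
    (fun γ : S => (ZeroAtInftyContinuousMap.evalCLM γ.1).comp T) (fun γ => γ.2)
    ((mk_set_le _).trans hΓ.le) fun x => ?_
  obtain ⟨γ, hγS, hγ⟩ := not_subset.mp fun h => hS ((T x).countable_support.mono h)
  exact ⟨⟨γ, hγS⟩, not_not.mp hγ⟩

/-- a nonseparable Banach space with a bounded operator into c₀(Γ), |Γ| = ℵ₁,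
with nonseparable range satisfies cov(X) = ℵ₁. -/
theorem stmt11 (X : Type u) [NormedAddCommGroup X] [NormedSpace ℝ X] [CompleteSpace X]
    (hsep : ¬ TopologicalSpace.SeparableSpace X)
    (Γ : Type v) [TopologicalSpace Γ] [DiscreteTopology Γ] (hΓ : #Γ = Cardinal.aleph 1)
    (T : X →L[ℝ] ZeroAtInftyContinuousMap Γ ℝ)
    (hns : ¬ TopologicalSpace.IsSeparable (Set.range fun x => T x)) :
    covH X = Cardinal.aleph 1 :=
  stmt11_general X Γ hΓ T hns

end
end

section
/- Let K be a compact Hausdorff space. Suppose that for every subset A ⊆ K of cardinality ℵ₁ there is a continuous function f : K → ℝ whose restriction to A is injective. Then K has small diagonal. -/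
open Cardinal Set

universe u v

noncomputable section

/-!
The coordinates of an off-diagonal set `A` of size `ℵ₁` lie in a set of size `ℵ₁`, so some
continuous `f : K → ℝ` is injective on them. Then `dist (f x) (f y)` is positive on `A`, so one of
the countably many sets where it is at least `1 / (n + 1)` is uncountable, and the closure of such
a set stays inside a closed set missing the diagonal.
-/

theorem Cardinal.exists_superset_mk_eq {α : Type u} {s : Set α} {κ : Cardinal.{u}}
    (hκ : ℵ₀ ≤ κ) (hs : #s ≤ κ) (hα : κ ≤ #α) : ∃ t, s ⊆ t ∧ #t = κ := by
  obtain ⟨T, hT⟩ := le_mk_iff_exists_set.mp hα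
  refine ⟨s ∪ T, subset_union_left, le_antisymm ?_ ?_⟩
  · calc #(s ∪ T : Set α) ≤ #s + #T := mk_union_le s T
      _ ≤ κ + κ := add_le_add hs hT.le
      _ = κ := add_eq_self hκ
  · exact hT ▸ mk_le_mk_of_subset subset_union_right

theorem Cardinal.mk_image_fst_union_image_snd_le {α : Type u} (A : Set (α × α)) {κ : Cardinal.{u}}
    (hκ : ℵ₀ ≤ κ) (hA : #A ≤ κ) : #(Prod.fst '' A ∪ Prod.snd '' A : Set α) ≤ κ :=
  calc #(Prod.fst '' A ∪ Prod.snd '' A : Set α) ≤ #(Prod.fst '' A) + #(Prod.snd '' A) :=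
        mk_union_le _ _
    _ ≤ κ + κ := add_le_add (mk_image_le.trans hA) (mk_image_le.trans hA)
    _ = κ := add_eq_self hκ

theorem Cardinal.aleph_one_le_mk_of_not_countable {α : Type u} {A : Set (α × α)}
    (hA : ¬ A.Countable) : ℵ₁ ≤ #α := by
  by_contra hα
  have : Countable α := mk_le_aleph0_iff.mp (lt_aleph_one_iff.mp (not_le.mp hα))
  exact hA A.to_countable

theorem exists_not_countable_subset_closure_pos {Y : Type*} [TopologicalSpace Y] {φ : Y → ℝ}
    (hφ : Continuous φ) {A : Set Y} (hA : ¬ A.Countable) (hpos : ∀ y ∈ A, 0 < φ y) :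
    ∃ B ⊆ A, ¬ B.Countable ∧ ∀ y ∈ closure B, 0 < φ y := by
  set level : ℕ → Set Y := fun n => {y | 1 / ((n : ℝ) + 1) ≤ φ y}
  have hcover : A = ⋃ n, A ∩ level n := by
    rw [← inter_iUnion, eq_comm, inter_eq_left]
    intro y hy
    obtain ⟨n, hn⟩ := exists_nat_one_div_lt (hpos y hy)
    exact mem_iUnion.mpr ⟨n, hn.le⟩
  obtain ⟨n, hn⟩ : ∃ n, ¬ (A ∩ level n).Countable := by
    by_contra! h
    exact hA (hcover ▸ countable_iUnion h)
  refine ⟨A ∩ level n, inter_subset_left, hn, fun y hy => ?_⟩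
  have hclosed : IsClosed (level n) := isClosed_le continuous_const hφ
  exact lt_of_lt_of_le (by positivity) (closure_minimal inter_subset_right hclosed hy)

theorem stmt12_general (K : Type u) [TopologicalSpace K]
    (h : ∀ A : Set K, #A = Cardinal.aleph 1 → ∃ f : C(K, ℝ), Set.InjOn f A) :
    HasSmallDiagonal K := by
  intro A hA hdiag
  have hA_unc : ¬ A.Countable := fun hc =>
    aleph0_lt_aleph_one.not_ge (hA ▸ le_aleph0_iff_set_countable.mpr hc)
  obtain ⟨S, hAS, hS⟩ := exists_superset_mk_eq (aleph0_le_aleph 1)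
    (mk_image_fst_union_image_snd_le A (aleph0_le_aleph 1) hA.le)
    (aleph_one_le_mk_of_not_countable hA_unc)
  obtain ⟨f, hf⟩ := h S hS
  have hsep : ∀ p ∈ A, 0 < dist (f p.1) (f p.2) := by
    intro p hp
    refine dist_pos.mpr fun heq => ?_
    have hp' : p ∈ A ∩ diagonal K :=
      ⟨hp, hf (hAS (Or.inl ⟨p, hp, rfl⟩)) (hAS (Or.inr ⟨p, hp, rfl⟩)) heq⟩
    simp [hdiag] at hp'
  obtain ⟨B, hBA, hB, hpos⟩ :=
    exists_not_countable_subset_closure_pos (by fun_prop) hA_unc hsep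
  refine ⟨B, hBA, hB, eq_empty_of_forall_notMem fun p ⟨hp, hdiag_p⟩ => ?_⟩
  have : dist (f p.1) (f p.2) = 0 := by rw [show p.1 = p.2 from hdiag_p, dist_self]
  exact (hpos p hp).ne' this

/-- if every set of size ℵ₁ in K is injected into ℝ by some continuous
function, then K has small diagonal. -/
theorem stmt12 (K : Type u) [TopologicalSpace K] [CompactSpace K] [T2Space K]
    (h : ∀ A : Set K, #A = Cardinal.aleph 1 → ∃ f : C(K, ℝ), Set.InjOn f A) :
    HasSmallDiagonal K :=
  stmt12_general K h

end
end
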